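/- Let L be a bounded chain and G a finite MH-homogeneous L-colored graph. Then for all vertices x, y of G, χ(x,y) ≻ 0 implies χ(x) = χ(y). -/

import Mathlib

/-- An `L`-colored graph on vertex set `V`: vertex colors and symmetric,
irreflexive edge colors (color `⊥` means "no edge"). -/
structure LGraph (L : Type*) [PartialOrder L] [BoundedOrder L] (V : Type*) where
  vcol : V → L
  ecol : V → V → L
  ecol_irrefl : ∀ x, ecol x x = ⊥
  ecol_symm : ∀ x y, ecol x y = ecol y x

variable {L V : Type*} [PartialOrder L] [BoundedOrder L]

/-- An endomorphism of an `L`-colored graph weakly increases all colors. -/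
def LGraph.IsEndo (G : LGraph L V) (f : V → V) : Prop :=
  (∀ x, G.vcol x ≤ G.vcol (f x)) ∧ (∀ x y, G.ecol x y ≤ G.ecol (f x) (f y))

/-- A homomorphism from the finite induced substructure on `S` into `G`. -/
def LGraph.IsPartialHom (G : LGraph L V) (S : Set V) (f : V → V) : Prop :=
  (∀ x ∈ S, G.vcol x ≤ G.vcol (f x)) ∧
  (∀ x ∈ S, ∀ y ∈ S, G.ecol x y ≤ G.ecol (f x) (f y))

/-- `G` is MH-homogeneous: every monomorphism between finite induced
substructures extends to an endomorphism. -/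
def LGraph.MH (G : LGraph L V) : Prop :=
  ∀ S : Set V, S.Finite → ∀ f : V → V, Set.InjOn f S → G.IsPartialHom S f →
    ∃ g : V → V, G.IsEndo g ∧ ∀ x ∈ S, g x = f x

/-- `G` is HH-homogeneous: every homomorphism between finite induced
substructures extends to an endomorphism. -/
def LGraph.HH (G : LGraph L V) : Prop :=
  ∀ S : Set V, S.Finite → ∀ f : V → V, G.IsPartialHom S f →
    ∃ g : V → V, G.IsEndo g ∧ ∀ x ∈ S, g x = f x

/-- Adjacency: edge color is nonzero. -/
def LGraph.Adj (G : LGraph L V) (x y : V) : Prop := G.ecol x y ≠ ⊥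

/-- Two vertices are connected if joined by a path of edges of nonzero color. -/
def LGraph.Conn (G : LGraph L V) (x y : V) : Prop := Relation.ReflTransGen G.Adj x y

/-- `S` is a connected component of `G`. -/
def LGraph.IsComponent (G : LGraph L V) (S : Set V) : Prop :=
  ∃ x : V, S = {y | G.Conn x y}

/-- All vertices of `G` have the same color. -/
def LGraph.VertexUniform (G : LGraph L V) : Prop := ∃ α : L, ∀ x, G.vcol x = α

/-- `G` restricted to `S` is a uniform `L`-colored graph: all vertices of one
color and all edges between distinct vertices of one fixed nonzero color. -/
def LGraph.UniformOn (G : LGraph L V) (S : Set V) : Prop :=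
  (∃ α : L, ∀ x ∈ S, G.vcol x = α) ∧
  (∃ β : L, ⊥ < β ∧ ∀ x ∈ S, ∀ y ∈ S, x ≠ y → G.ecol x y = β)

/-- `G[S]` is isomorphic to `U(n, α, β)`, the connected uniform graph on `n`
vertices, all colored `α`, with all edges colored `β ≻ ⊥`. -/
def LGraph.IsU (G : LGraph L V) (S : Set V) (n : ℕ) (α β : L) : Prop :=
  S.ncard = n ∧ (∀ x ∈ S, G.vcol x = α) ∧ ⊥ < β ∧
  (∀ x ∈ S, ∀ y ∈ S, x ≠ y → G.ecol x y = β)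

/-- `L` is a diamond: all elements other than `⊥` and `⊤` are pairwise
incomparable. -/
def IsDiamond (L : Type*) [PartialOrder L] [BoundedOrder L] : Prop :=
  ∀ a b : L, a ≠ ⊥ → a ≠ ⊤ → b ≠ ⊥ → b ≠ ⊤ → a ≤ b → a = b

/-- An automorphism of an `L`-colored graph. -/
def LGraph.IsAuto (G : LGraph L V) (f : V → V) : Prop :=
  Function.Bijective f ∧ (∀ x, G.vcol (f x) = G.vcol x) ∧
  (∀ x y, G.ecol (f x) (f y) = G.ecol x y)

/-- `G` is ultrahomogeneous: every isomorphism between finite induced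
substructures extends to an automorphism. -/
def LGraph.Ultra (G : LGraph L V) : Prop :=
  ∀ S : Set V, S.Finite → ∀ f : V → V, Set.InjOn f S →
    (∀ x ∈ S, G.vcol (f x) = G.vcol x) →
    (∀ x ∈ S, ∀ y ∈ S, G.ecol (f x) (f y) = G.ecol x y) →
    ∃ g : V → V, G.IsAuto g ∧ ∀ x ∈ S, g x = f x

/-!
Suppose an edge `xy` of nonzero color ascends, `χ(x) < χ(y)`, and choose it with `χ(y) = β`
maximal. Let `e` be an idempotent endomorphism fixing `x` whose range `R` is as small as
possible; then for every endomorphism `m` fixing `x`, a power of `e ∘ m` is the identity on `R`,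
so `e ∘ m` preserves the edge colors inside `R`. Now `w = e y ∈ R` is adjacent to `x` and has
color `β`. Mapping `x ↦ w` and composing with `e` gives an endomorphism `u` whose idempotent
power sends `x` to a vertex `z ∈ R` not adjacent to `x`; by maximality the colors along the
`u`-orbit of `u x = w` stay `β`, so `χ(z) = β`. Finally the monomorphism `x ↦ x, z ↦ w`
extends to an endomorphism `m` fixing `x`, and `e ∘ m` would turn the non-edge `xz` of `R` into
the edge `xw` of `R`.
-/

theorem exists_pow_isIdempotentElem {M : Type*} [Monoid M] [Finite M] (a : M) :
    ∃ n, 0 < n ∧ IsIdempotentElem (a ^ n) := by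
  obtain ⟨i, j, hij, h⟩ := Finite.exists_ne_map_eq_of_infinite (fun n : ℕ => a ^ n)
  wlog hlt : i < j generalizing i j
  · exact this j i hij.symm h.symm (hij.lt_or_gt.resolve_left hlt)
  obtain ⟨d, rfl⟩ : ∃ d, j = i + (d + 1) := ⟨j - i - 1, by omega⟩
  have hper : ∀ c, a ^ (i + c * (d + 1)) = a ^ i := by
    intro c
    induction c with
    | zero => simp
    | succ c ih => rw [add_mul, one_mul, ← add_assoc, pow_add, ih, ← pow_add, ← h]
  refine ⟨(i + 1) * (d + 1), by positivity, ?_⟩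
  obtain ⟨r, hr⟩ : ∃ r, (i + 1) * (d + 1) = i + r := ⟨i * d + d + 1, by ring⟩
  rw [IsIdempotentElem, ← pow_add]
  calc a ^ ((i + 1) * (d + 1) + (i + 1) * (d + 1))
      = a ^ r * a ^ (i + (i + 1) * (d + 1)) := by rw [← pow_add]; congr 1; omega
    _ = a ^ ((i + 1) * (d + 1)) := by rw [hper, ← pow_add, hr, add_comm]

instance Function.End.finite {α : Type*} [Finite α] : Finite (Function.End α) := Pi.finite

theorem Submonoid.exists_isIdempotentElem_pow_mul_fixes_range {V : Type*} [Finite V]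
    (M : Submonoid (Function.End V)) :
    ∃ e ∈ M, IsIdempotentElem e ∧
      ∀ m ∈ M, ∃ n, 0 < n ∧ ∀ r ∈ Set.range e, ((e * m) ^ n) r = r := by
  have : Nonempty {e // e ∈ M ∧ IsIdempotentElem e} := ⟨⟨1, M.one_mem, .one⟩⟩
  obtain ⟨⟨e, he, hidem⟩, hmin⟩ := Finite.exists_min
    (fun e : {e // e ∈ M ∧ IsIdempotentElem e} => (Set.range e.1).ncard)
  refine ⟨e, he, hidem, fun m hm => ?_⟩
  obtain ⟨n, hn, hpow⟩ := exists_pow_isIdempotentElem (e * m)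
  have hsub : Set.range ((e * m) ^ n) ⊆ Set.range e := by
    obtain ⟨k, rfl⟩ : ∃ k, n = k + 1 := ⟨n - 1, by omega⟩
    rintro _ ⟨v, rfl⟩
    exact ⟨m (((e * m) ^ k) v), by rw [pow_succ', mul_assoc]; rfl⟩
  have hrange : Set.range ((e * m) ^ n) = Set.range e :=
    Set.eq_of_subset_of_ncard_le hsub
      (hmin ⟨_, M.pow_mem (M.mul_mem he hm) n, hpow⟩) (Set.toFinite _)
  refine ⟨n, hn, fun r hr => ?_⟩
  obtain ⟨v, rfl⟩ := hrange ▸ hr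
  exact congrFun hpow v

namespace LGraph

theorem isEndo_id (G : LGraph L V) : G.IsEndo id :=
  ⟨fun _ => le_rfl, fun _ _ => le_rfl⟩

theorem IsEndo.comp {G : LGraph L V} {f g : V → V} (hf : G.IsEndo f) (hg : G.IsEndo g) :
    G.IsEndo (f ∘ g) :=
  ⟨fun x => (hg.1 x).trans (hf.1 _), fun x y => (hg.2 x y).trans (hf.2 _ _)⟩

def endMonoid (G : LGraph L V) : Submonoid (Function.End V) where
  carrier := {f | G.IsEndo f}
  mul_mem' hf hg := IsEndo.comp hf hg
  one_mem' := G.isEndo_id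

theorem IsEndo.iterate {G : LGraph L V} {f : V → V} (hf : G.IsEndo f) (n : ℕ) :
    G.IsEndo f^[n] :=
  G.endMonoid.pow_mem (x := f) hf n

theorem IsEndo.ecol_eq_bot_of_map_eq {G : LGraph L V} {f : V → V} (hf : G.IsEndo f) {a b : V}
    (h : f a = f b) : G.ecol a b = ⊥ :=
  le_bot_iff.mp (by simpa [h, G.ecol_irrefl] using hf.2 a b)

theorem IsEndo.ecol_map_eq_of_iterate_fixed {G : LGraph L V} {f : V → V} (hf : G.IsEndo f)
    {n : ℕ} (hn : 0 < n) {a b : V} (ha : f^[n] a = a) (hb : f^[n] b = b) :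
    G.ecol (f a) (f b) = G.ecol a b := by
  refine le_antisymm ?_ (hf.2 a b)
  obtain ⟨k, rfl⟩ : ∃ k, n = k + 1 := ⟨n - 1, by omega⟩
  simpa only [← Function.iterate_succ_apply, ha, hb] using (hf.iterate k).2 (f a) (f b)

def IsAscendingEdge (G : LGraph L V) (x y : V) : Prop :=
  ⊥ < G.ecol x y ∧ G.vcol x < G.vcol y

theorem IsEndo.vcol_iterate_eq {G : LGraph L V} {f : V → V} (hf : G.IsEndo f) {β : L}
    (hβ : ∀ u v, G.IsAscendingEdge u v → G.vcol v ≤ β) {a : V}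
    (hadj : ⊥ < G.ecol a (f a)) (hfa : G.vcol (f a) = β) (n : ℕ) :
    G.vcol (f^[n] (f a)) = β := by
  induction n with
  | zero => exact hfa
  | succ n ih =>
    rw [Function.iterate_succ_apply']
    have hle : β ≤ G.vcol (f (f^[n] (f a))) := ih ▸ hf.1 _
    have hedge : ⊥ < G.ecol (f^[n] (f a)) (f (f^[n] (f a))) :=
      calc ⊥ < G.ecol a (f a) := hadj
        _ ≤ G.ecol (f^[n + 1] a) (f^[n + 1] (f a)) := (hf.iterate (n + 1)).2 a (f a)
        _ = _ := by rw [Function.iterate_succ_apply, Function.iterate_succ_apply']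
    refine (eq_of_le_of_not_lt hle fun hlt => ?_).symm
    exact (hβ _ _ ⟨hedge, by rwa [ih]⟩).not_gt hlt

theorem MH.exists_isEndo_map_pair {G : LGraph L V} (hMH : G.MH) {a b a' b' : V}
    (hinj : a = b ↔ a' = b') (ha : G.vcol a ≤ G.vcol a') (hb : G.vcol b ≤ G.vcol b')
    (hab : G.ecol a b ≤ G.ecol a' b') :
    ∃ g, G.IsEndo g ∧ g a = a' ∧ g b = b' := by
  classical
  let f : V → V := fun v => if v = a then a' else b'
  have hfb : f b = b' := by
    by_cases h : b = a
    · simp [f, h, hinj.mp h.symm]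
    · simp [f, h]
  have hba : G.ecol b a ≤ G.ecol b' a' := by rwa [G.ecol_symm, G.ecol_symm b']
  obtain ⟨g, hg, hgf⟩ := hMH {a, b} (Set.toFinite _) f
    (by rintro p (rfl | rfl) q (rfl | rfl) hpq <;> simp_all [f, eq_comm])
    ⟨by rintro p (rfl | rfl) <;> simp_all [f],
     by rintro p (rfl | rfl) q (rfl | rfl) <;> simp_all [f, G.ecol_irrefl]⟩
  exact ⟨g, hg, by simpa [f] using hgf a (by simp), hfb ▸ hgf b (by simp)⟩

theorem MH.exists_isEndo_map {G : LGraph L V} (hMH : G.MH) {a a' : V}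
    (h : G.vcol a ≤ G.vcol a') : ∃ g, G.IsEndo g ∧ g a = a' :=
  let ⟨g, hg, hga, _⟩ :=
    hMH.exists_isEndo_map_pair (iff_of_true rfl rfl) h h (by simp [G.ecol_irrefl])
  ⟨g, hg, hga⟩

theorem MH.false_of_isAscendingEdge_of_forall_le [Finite V] {G : LGraph L V} (hMH : G.MH)
    {x y : V} (hxy : G.IsAscendingEdge x y)
    (hmax : ∀ u v, G.IsAscendingEdge u v → G.vcol v ≤ G.vcol y) : False := by
  obtain ⟨e, he, hidem, hfix⟩ := Submonoid.exists_isIdempotentElem_pow_mul_fixes_range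
    (G.endMonoid ⊓ MulAction.stabilizerSubmonoid (Function.End V) x)
  obtain ⟨he, hex⟩ : G.IsEndo e ∧ e x = x := he
  have hfixR (v : V) : e (e v) = e v := congrFun hidem v
  have hxw : ⊥ < G.ecol x (e y) := hxy.1.trans_le (by simpa only [hex] using he.2 x y)
  have hw : G.vcol (e y) = G.vcol y :=
    le_antisymm (hmax _ _ ⟨hxw, hxy.2.trans_le (he.1 y)⟩) (he.1 y)
  obtain ⟨q, hq, hqx⟩ : ∃ q : Function.End V, G.IsEndo q ∧ q x = e y :=
    hMH.exists_isEndo_map (hxy.2.le.trans_eq hw.symm)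
  have hu : G.IsEndo (e * q) := he.comp hq
  have hux : (e * q) x = e y := (congrArg e hqx).trans (hfixR y)
  obtain ⟨k, hk, hidem_u⟩ := exists_pow_isIdempotentElem (e * q)
  obtain ⟨k, rfl⟩ : ∃ k', k = k' + 1 := ⟨k - 1, by omega⟩
  set z := ((e * q) ^ (k + 1)) x
  have hxz : G.ecol x z = ⊥ :=
    (hu.iterate (k + 1)).ecol_eq_bot_of_map_eq (congrFun hidem_u x).symm
  have hz : G.vcol z = G.vcol y := hu.vcol_iterate_eq hmax (hux ▸ hxw) (hux ▸ hw) k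
  have hzx : z ≠ x := fun h => hxy.2.ne (h ▸ hz)
  have hzR : z ∈ Set.range e :=
    ⟨q (((e * q) ^ k) x), (Function.iterate_succ_apply' (e * q) k x).symm⟩
  have hxey : x ≠ e y := fun h => hxw.ne' (h ▸ G.ecol_irrefl x)
  obtain ⟨m, hm, hmx, hmz⟩ : ∃ m : Function.End V, G.IsEndo m ∧ m x = x ∧ m z = e y :=
    hMH.exists_isEndo_map_pair (iff_of_false hzx.symm hxey) le_rfl (hz.trans hw.symm).le
      (hxz ▸ bot_le)
  obtain ⟨n, hn, hfixn⟩ := hfix m ⟨hm, hmx⟩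
  have hpres := (he.comp hm).ecol_map_eq_of_iterate_fixed hn (hfixn x ⟨x, hex⟩) (hfixn z hzR)
  change G.ecol (e (m x)) (e (m z)) = _ at hpres
  rw [hmx, hmz, hex, hfixR, hxz] at hpres
  exact hxw.ne' hpres

theorem exists_isAscendingEdge_forall_le {L V : Type*} [LinearOrder L] [BoundedOrder L]
    [Finite V] (G : LGraph L V) {x y : V} (hxy : G.IsAscendingEdge x y) :
    ∃ x y, G.IsAscendingEdge x y ∧ ∀ u v, G.IsAscendingEdge u v → G.vcol v ≤ G.vcol y := by
  obtain ⟨⟨x', y'⟩, hmem, hmax⟩ := Set.exists_max_image {p : V × V | G.IsAscendingEdge p.1 p.2}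
    (fun p => G.vcol p.2) (Set.toFinite _) ⟨(x, y), hxy⟩
  exact ⟨x', y', hmem, fun u v huv => hmax (u, v) huv⟩

theorem MH.not_isAscendingEdge {L V : Type*} [LinearOrder L] [BoundedOrder L] [Finite V]
    {G : LGraph L V} (hMH : G.MH) (x y : V) : ¬G.IsAscendingEdge x y := fun hxy =>
  let ⟨_, _, hx'y', hmax⟩ := G.exists_isAscendingEdge_forall_le hxy
  hMH.false_of_isAscendingEdge_of_forall_le hx'y' hmax

end LGraph

/-- Lemma 3(b). -/
theorem stmt3 {L V : Type*} [LinearOrder L] [BoundedOrder L] [Finite V]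
    (G : LGraph L V) (hMH : G.MH) :
    ∀ x y : V, ⊥ < G.ecol x y → G.vcol x = G.vcol y := by
  intro x y hxy
  have hyx : ⊥ < G.ecol y x := G.ecol_symm x y ▸ hxy
  exact le_antisymm (not_lt.mp fun h => hMH.not_isAscendingEdge y x ⟨hyx, h⟩)
    (not_lt.mp fun h => hMH.not_isAscendingEdge x y ⟨hxy, h⟩)
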